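/- arXiv:1510.02694 — 3 statements merged into one kernel-verified Lean document; each statement's English description precedes it below -/
import Mathlib

section
/- Let r = (r_1,...,r_n) and r' = (r'_1,...,r'_n) be nonnegative real vectors. Let k with 1 ≤ k ≤ n be such that r'_i ≥ r'_j for all i ≤ k < j. Suppose δ_i := r_i - r'_i ≥ 0 for i ≤ k and δ_j := r'_j - r_j ≥ 0 for j > k. Let D = min_{i ≤ k} r_i - max_{j > k} r_j and Δ = Σ_{i ≤ k} δ_i. If Δ ≥ Σ_{j > k} δ_j, then ‖r'‖² ≤ ‖r‖² - D·Δ, where ‖·‖ denotes the Euclidean norm. -/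
/-!
On the first block each coordinate moves down by `δᵢ`, so `rᵢ² - r'ᵢ² = δᵢ (rᵢ + r'ᵢ)`; on the second
block each moves up by `δⱼ`, so `r'ⱼ² - rⱼ² = δⱼ (rⱼ + r'ⱼ)`. A threshold `t` separating the two
blocks of `r'` (here the minimum of `r'` on the first block) bounds these factors by `m + t` from
below and `M + t` from above, where `m` and `M` are the minimum and maximum of `r` on the two
blocks. With `Δ' = ∑ⱼ δⱼ ≤ Δ`, the squared norm therefore drops by at least
`(m + t) Δ - (M + t) Δ' ≥ (m - M) Δ`, and `M + t ≥ 0` since `t ≥ r'ⱼ ≥ rⱼ ≥ 0` on the second block.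
-/

open Finset

section SumSq

variable {ι : Type*} (s : Finset ι) (r r' : ι → ℝ)

theorem mul_sum_sub_le_sum_sq_sub_sum_sq {m t : ℝ} (hm : ∀ i ∈ s, m ≤ r i)
    (ht : ∀ i ∈ s, t ≤ r' i) (hδ : ∀ i ∈ s, r' i ≤ r i) :
    (m + t) * ∑ i ∈ s, (r i - r' i) ≤ ∑ i ∈ s, r i ^ 2 - ∑ i ∈ s, r' i ^ 2 := by
  rw [← sum_sub_distrib, mul_sum]
  refine sum_le_sum fun i hi => ?_
  have hsq : r i ^ 2 - r' i ^ 2 = (r i + r' i) * (r i - r' i) := by ring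
  rw [hsq]
  exact mul_le_mul_of_nonneg_right (add_le_add (hm i hi) (ht i hi)) (sub_nonneg.2 (hδ i hi))

theorem sum_sq_sub_sum_sq_le_mul_sum_sub {M t : ℝ} (hM : ∀ i ∈ s, r i ≤ M)
    (ht : ∀ i ∈ s, r' i ≤ t) (hδ : ∀ i ∈ s, r i ≤ r' i) :
    ∑ i ∈ s, r' i ^ 2 - ∑ i ∈ s, r i ^ 2 ≤ (M + t) * ∑ i ∈ s, (r' i - r i) := by
  have h := mul_sum_sub_le_sum_sq_sub_sum_sq s (-r) (-r') (m := -M) (t := -t)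
    (fun i hi => neg_le_neg (hM i hi)) (fun i hi => neg_le_neg (ht i hi))
    (fun i hi => neg_le_neg (hδ i hi))
  simp only [Pi.neg_apply, neg_sq, neg_sub_neg] at h
  linarith

theorem sum_sq_le_sum_sq_sub_of_transfer [Fintype ι] [DecidableEq ι] {m M t : ℝ}
    (hm : ∀ i ∈ s, m ≤ r i) (hM : ∀ j ∈ sᶜ, r j ≤ M)
    (ht₁ : ∀ i ∈ s, t ≤ r' i) (ht₂ : ∀ j ∈ sᶜ, r' j ≤ t)
    (hδ₁ : ∀ i ∈ s, r' i ≤ r i) (hδ₂ : ∀ j ∈ sᶜ, r j ≤ r' j) (hMt : 0 ≤ M + t)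
    (hbal : ∑ j ∈ sᶜ, (r' j - r j) ≤ ∑ i ∈ s, (r i - r' i)) :
    ∑ i, r' i ^ 2 ≤ ∑ i, r i ^ 2 - (m - M) * ∑ i ∈ s, (r i - r' i) := by
  have hdown := mul_sum_sub_le_sum_sq_sub_sum_sq s r r' hm ht₁ hδ₁
  have hup := sum_sq_sub_sum_sq_le_mul_sum_sub sᶜ r r' hM ht₂ hδ₂
  have hgap := mul_le_mul_of_nonneg_left hbal hMt
  rw [← sum_add_sum_compl s fun i => r i ^ 2, ← sum_add_sum_compl s fun i => r' i ^ 2]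
  linarith

end SumSq

theorem stmt_0_general (n k : ℕ)
    (r r' : Fin n → ℝ)
    (hr : ∀ i, 0 ≤ r i)
    (hord : ∀ i j : Fin n, i.val < k → k ≤ j.val → r' j ≤ r' i)
    (hδ1 : ∀ i : Fin n, i.val < k → 0 ≤ r i - r' i)
    (hδ2 : ∀ j : Fin n, k ≤ j.val → 0 ≤ r' j - r j)
    (S1 : Finset (Fin n)) (S2 : Finset (Fin n))
    (hS1 : S1 = univ.filter (fun i => i.val < k))
    (hS2 : S2 = univ.filter (fun j => k ≤ j.val))
    (hS1ne : S1.Nonempty) (hS2ne : S2.Nonempty)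
    (D Δ : ℝ)
    (hD : D = S1.inf' hS1ne r - S2.sup' hS2ne r)
    (hΔ : Δ = ∑ i ∈ S1, (r i - r' i))
    (hbal : ∑ j ∈ S2, (r' j - r j) ≤ Δ) :
    ∑ i, (r' i) ^ 2 ≤ ∑ i, (r i) ^ 2 - D * Δ := by
  have hS2compl : S2 = S1ᶜ := by ext j; simp [hS1, hS2]
  subst hD hΔ hS2compl
  have hlow : ∀ i ∈ S1, i.val < k := fun i hi => by simpa [hS1] using hi
  have hhigh : ∀ j ∈ S1ᶜ, k ≤ j.val := fun j hj => by simpa [hS1] using hj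
  have hsep : ∀ j ∈ S1ᶜ, r' j ≤ S1.inf' hS1ne r' := fun j hj =>
    le_inf' hS1ne r' fun i hi => hord i j (hlow i hi) (hhigh j hj)
  have hMt : 0 ≤ S1ᶜ.sup' hS2ne r + S1.inf' hS1ne r' := by
    obtain ⟨j, hj⟩ := hS2ne
    linarith [hr j, hδ2 j (hhigh j hj), le_sup' r hj, hsep j hj]
  exact sum_sq_le_sum_sq_sub_of_transfer S1 r r' (fun i hi => inf'_le r hi)
    (fun j hj => le_sup' r hj) (fun i hi => inf'_le r' hi) hsep
    (fun i hi => sub_nonneg.1 (hδ1 i (hlow i hi))) (fun j hj => sub_nonneg.1 (hδ2 j (hhigh j hj)))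
    hMt hbal

/-- Technical lemma on the 2-norm of surplus vectors (Lemma "technical lemma"). -/
theorem stmt_0 (n k : ℕ) (hk1 : 1 ≤ k) (hkn : k < n)
    (r r' : Fin n → ℝ)
    (hr : ∀ i, 0 ≤ r i) (hr' : ∀ i, 0 ≤ r' i)
    (hord : ∀ i j : Fin n, i.val < k → k ≤ j.val → r' j ≤ r' i)
    (hδ1 : ∀ i : Fin n, i.val < k → 0 ≤ r i - r' i)
    (hδ2 : ∀ j : Fin n, k ≤ j.val → 0 ≤ r' j - r j)
    (S1 : Finset (Fin n)) (S2 : Finset (Fin n))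
    (hS1 : S1 = univ.filter (fun i => i.val < k))
    (hS2 : S2 = univ.filter (fun j => k ≤ j.val))
    (hS1ne : S1.Nonempty) (hS2ne : S2.Nonempty)
    (D Δ : ℝ)
    (hD : D = S1.inf' hS1ne r - S2.sup' hS2ne r)
    (hΔ : Δ = ∑ i ∈ S1, (r i - r' i))
    (hbal : ∑ j ∈ S2, (r' j - r j) ≤ Δ) :
    ∑ i, (r' i) ^ 2 ≤ ∑ i, (r i) ^ 2 - D * Δ :=
  stmt_0_general n k r r' hr hord hδ1 hδ2 S1 S2 hS1 hS2 hS1ne hS2ne D Δ hD hΔ hbal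
end

section
/- Let G be a bipartite graph on vertex sets B and C with positive real edge weights u_e. Suppose D is a cycle in G with 2-partition (D_0, D_1) (adjacent edges get distinct colors). If there exists a positive price vector p : C → ℝ_{>0} such that for every buyer b on the cycle with incident cycle edges e_0 = (b,c_0) ∈ D_0 and e_1 = (b,c_1) ∈ D_1 we have u_{e_0}/p(c_0) = u_{e_1}/p(c_1), then ∏_{e ∈ D_0} u_e = ∏_{e ∈ D_1} u_e. -/
open Finset

/-- Cross-multiplying and taking products, the price factors on both sides agree because `σ`
only permutes them, so they cancel. -/
theorem Finset.prod_eq_prod_of_div_eq_div_comp_perm {ι K : Type*} [Fintype ι]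
    [CommGroupWithZero K] (σ : Equiv.Perm ι) {u v p : ι → K} (hp : ∀ i, p i ≠ 0)
    (h : ∀ i, u i / p i = v i / p (σ i)) : ∏ i, u i = ∏ i, v i := by
  have hcross : (∏ i, u i) * ∏ i, p (σ i) = (∏ i, v i) * ∏ i, p i := by
    rw [← prod_mul_distrib, ← prod_mul_distrib]
    exact prod_congr rfl fun i _ => (div_eq_div_iff (hp i) (hp (σ i))).1 (h i)
  rw [Equiv.prod_comp] at hcross
  exact mul_right_cancel₀ (prod_ne_zero_iff.2 fun i _ => hp i) hcross

theorem stmt_1_general (m : ℕ) [NeZero m]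
    (u0 u1 : Fin m → ℝ)
    (p : Fin m → ℝ) (hp : ∀ i, 0 < p i)
    (heq : ∀ i : Fin m, u0 i / p i = u1 i / p (i + 1)) :
    ∏ i, u0 i = ∏ i, u1 i :=
  prod_eq_prod_of_div_eq_div_comp_perm (Equiv.addRight 1) (fun i => (hp i).ne') heq

/-- If a cycle of the utility graph lies in the equality graph of some positive
price vector, then the products of the utilities over the two color classes of
the cycle coincide.  The cycle is represented by buyers `b_0,…,b_{m-1}` and goods
`c_0,…,c_{m-1}`; the `D_0`-edge of buyer `i` goes to good `i` (utility `u0 i`)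
and the `D_1`-edge of buyer `i` goes to good `i+1 (mod m)` (utility `u1 i`). -/
theorem stmt_1 (m : ℕ) [NeZero m] (hm : 1 ≤ m)
    (u0 u1 : Fin m → ℝ) (hu0 : ∀ i, 0 < u0 i) (hu1 : ∀ i, 0 < u1 i)
    (p : Fin m → ℝ) (hp : ∀ i, 0 < p i)
    (heq : ∀ i : Fin m, u0 i / p i = u1 i / p (i + 1)) :
    ∏ i, u0 i = ∏ i, u1 i :=
  stmt_1_general m u0 u1 p hp heq
end

section
/- Let Q ≥ 2 and L' = 8n·⌈Q⌉^{2n} for a positive integer n. Let D_0, D_1 be disjoint sets of at most n edges each, with distinct primes q_e ≤ Q assigned to the edges, and integers ℓ_e such that (1+1/L')^{ℓ_e} is a (1+1/L')-multiplicative approximation of q_e. If ∏_{e∈D_0} q_e > ∏_{e∈D_1} q_e, then Σ_{e∈D_0} ℓ_e > Σ_{e∈D_1} ℓ_e. -/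
/-!
With `t = 1 + 1/L'`, multiplying the approximations gives `t ^ (∑_{D1} ℓ) ≤ P₁ t ^ |D1|` and
`P₀ / t ^ |D0| ≤ t ^ (∑_{D0} ℓ)`, where `Pᵢ = ∏_{Di} q`. The products are integers, so
`P₁ + 1 ≤ P₀`, while `P₁ ≤ ⌈Q⌉^(2n)` and `t ^ (2n) ≤ exp (1 / (4⌈Q⌉^(2n)))`, so the accumulated
error `t ^ (2n)` cannot bridge the gap between `P₁` and `P₀`.
-/

open Finset Real

theorem prod_zpow_eq_zpow_sum {ι G₀ : Type*} [CommGroupWithZero G₀] {a : G₀} (ha : a ≠ 0)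
    (s : Finset ι) (f : ι → ℤ) : ∏ i ∈ s, a ^ f i = a ^ ∑ i ∈ s, f i := by
  classical
  induction s using Finset.induction_on with
  | empty => simp
  | insert i s hi ih => rw [prod_insert hi, sum_insert hi, zpow_add₀ ha, ih]

section MultiplicativeApproximation

variable {ι : Type*} {t : ℝ} (s : Finset ι) (x : ι → ℝ) (ℓ : ι → ℤ)

theorem zpow_sum_le_prod_mul_pow (ht : 0 < t) (h : ∀ i ∈ s, t ^ ℓ i ≤ x i * t) :
    t ^ ∑ i ∈ s, ℓ i ≤ (∏ i ∈ s, x i) * t ^ #s := by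
  rw [← prod_zpow_eq_zpow_sum ht.ne', ← prod_const, ← prod_mul_distrib]
  exact prod_le_prod (fun i _ => by positivity) h

theorem prod_div_pow_le_zpow_sum (ht : 0 < t) (hx : ∀ i ∈ s, 0 ≤ x i)
    (h : ∀ i ∈ s, x i / t ≤ t ^ ℓ i) :
    (∏ i ∈ s, x i) / t ^ #s ≤ t ^ ∑ i ∈ s, ℓ i := by
  rw [← prod_zpow_eq_zpow_sum ht.ne', ← prod_const, ← prod_div_distrib]
  exact prod_le_prod (fun i hi => div_nonneg (hx i hi) ht.le) h

end MultiplicativeApproximation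

theorem mul_one_add_one_div_pow_lt_add_one {n : ℕ} (hn : 1 ≤ n) {C P : ℝ} (hC : 1 ≤ C)
    (hP : 0 ≤ P) (hPC : P ≤ C) :
    P * (1 + 1 / (8 * n * C)) ^ (2 * n) < P + 1 := by
  set y := 1 / (4 * C) with hy
  have hn' : (1 : ℝ) ≤ n := by exact_mod_cast hn
  have hy0 : 0 < y := by positivity
  have hy4 : y ≤ 1 / 4 := by rw [hy, div_le_div_iff₀ (by positivity) (by norm_num)]; linarith
  have hpow : (1 + 1 / (8 * n * C)) ^ (2 * n) ≤ exp y := by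
    calc (1 + 1 / (8 * n * C)) ^ (2 * n) ≤ exp (1 / (8 * n * C)) ^ (2 * n) := by
          gcongr
          linarith [add_one_le_exp (1 / (8 * n * C))]
      _ = exp y := by
          rw [← exp_nat_mul, hy]; congr 1; push_cast; field_simp; ring
  have hPy : P * y ≤ 1 / 4 := by
    rw [hy, mul_one_div, div_le_div_iff₀ (by positivity) (by norm_num)]; linarith
  calc P * (1 + 1 / (8 * n * C)) ^ (2 * n) ≤ P * (1 / (1 - y)) := by
        gcongr
        exact hpow.trans (exp_bound_div_one_sub_of_interval hy0.le (by linarith))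
    _ < P + 1 := by
        rw [mul_one_div, div_lt_iff₀ (by linarith)]
        linarith

theorem stmt_14_general {α : Type*} [DecidableEq α] (n : ℕ) (hn : 1 ≤ n)
    (Q : ℝ) (hQ : 2 ≤ Q)
    (L' : ℕ) (hL' : L' = 8 * n * (⌈Q⌉₊) ^ (2 * n))
    (D0 D1 : Finset α)
    (hcard0 : D0.card ≤ n) (hcard1 : D1.card ≤ n)
    (q : α → ℕ)
    (hqQ : ∀ e ∈ D0 ∪ D1, (q e : ℝ) ≤ Q)
    (ℓ : α → ℤ)
    (happrox : ∀ e ∈ D0 ∪ D1,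
      (q e : ℝ) / (1 + 1 / (L' : ℝ)) ≤ (1 + 1 / (L' : ℝ)) ^ (ℓ e) ∧
      ((1 + 1 / (L' : ℝ)) ^ (ℓ e) : ℝ) ≤ (q e : ℝ) * (1 + 1 / (L' : ℝ)))
    (hprod : ∏ e ∈ D1, q e < ∏ e ∈ D0, q e) :
    ∑ e ∈ D1, ℓ e < ∑ e ∈ D0, ℓ e := by
  set t : ℝ := 1 + 1 / (L' : ℝ)
  set C : ℕ := ⌈Q⌉₊ ^ (2 * n)
  have hQ0 : 0 < ⌈Q⌉₊ := Nat.ceil_pos.mpr (by linarith)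
  have hC : 1 ≤ C := Nat.one_le_pow _ _ hQ0
  have hL : (L' : ℝ) = 8 * n * C := by simp [hL', C]
  have ht : 1 < t := lt_add_of_pos_right 1 (by rw [hL']; positivity)
  have hP1C : ∏ e ∈ D1, q e ≤ C :=
    calc ∏ e ∈ D1, q e ≤ ⌈Q⌉₊ ^ #D1 := prod_le_pow_card _ _ _ fun e he =>
          Nat.cast_le.mp ((hqQ e (mem_union_right _ he)).trans (Nat.le_ceil Q))
      _ ≤ C := Nat.pow_le_pow_right hQ0 (by omega)
  have hgap : (∏ e ∈ D1, (q e : ℝ)) * t ^ (2 * n) < ∏ e ∈ D0, (q e : ℝ) := by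
    have := mul_one_add_one_div_pow_lt_add_one hn (C := C) (by exact_mod_cast hC)
      (P := ∏ e ∈ D1, (q e : ℝ)) (by positivity) (by exact_mod_cast hP1C)
    rw [show t = 1 + 1 / (8 * n * C : ℝ) by rw [← hL]]
    linarith [(by exact_mod_cast hprod : (∏ e ∈ D1, (q e : ℝ)) + 1 ≤ ∏ e ∈ D0, (q e : ℝ))]
  rw [← zpow_lt_zpow_iff_right₀ ht]
  calc t ^ ∑ e ∈ D1, ℓ e ≤ (∏ e ∈ D1, (q e : ℝ)) * t ^ #D1 :=
        zpow_sum_le_prod_mul_pow _ _ _ (by positivity) fun e he =>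
          (happrox e (mem_union_right _ he)).2
    _ ≤ (∏ e ∈ D1, (q e : ℝ)) * t ^ n := by gcongr; exact ht.le
    _ < (∏ e ∈ D0, (q e : ℝ)) / t ^ n := by
        rwa [lt_div_iff₀ (by positivity), mul_assoc, ← pow_add, ← two_mul]
    _ ≤ (∏ e ∈ D0, (q e : ℝ)) / t ^ #D0 := by gcongr; exact ht.le
    _ ≤ t ^ ∑ e ∈ D0, ℓ e :=
        prod_div_pow_le_zpow_sum _ _ _ (by positivity) (fun _ _ => by positivity) fun e he =>
          (happrox e (mem_union_left _ he)).1

/-- Degeneracy removal: with `L' = 8n⌈Q⌉^{2n}` and exponents `ℓ_e` such that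
`(1+1/L')^{ℓ_e}` multiplicatively `(1+1/L')`-approximates the distinct primes
`q_e ≤ Q`, a strict inequality between the prime products over `D_0` and `D_1`
implies the corresponding strict inequality between the exponent sums. -/
theorem stmt_14 {α : Type*} [DecidableEq α] (n : ℕ) (hn : 1 ≤ n)
    (Q : ℝ) (hQ : 2 ≤ Q)
    (L' : ℕ) (hL' : L' = 8 * n * (⌈Q⌉₊) ^ (2 * n))
    (D0 D1 : Finset α) (hdisj : Disjoint D0 D1)
    (hcard0 : D0.card ≤ n) (hcard1 : D1.card ≤ n)
    (q : α → ℕ)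
    (hprime : ∀ e ∈ D0 ∪ D1, Nat.Prime (q e))
    (hqQ : ∀ e ∈ D0 ∪ D1, (q e : ℝ) ≤ Q)
    (hinj : ∀ e ∈ D0 ∪ D1, ∀ e' ∈ D0 ∪ D1, q e = q e' → e = e')
    (ℓ : α → ℤ)
    (happrox : ∀ e ∈ D0 ∪ D1,
      (q e : ℝ) / (1 + 1 / (L' : ℝ)) ≤ (1 + 1 / (L' : ℝ)) ^ (ℓ e) ∧
      ((1 + 1 / (L' : ℝ)) ^ (ℓ e) : ℝ) ≤ (q e : ℝ) * (1 + 1 / (L' : ℝ)))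
    (hprod : ∏ e ∈ D1, q e < ∏ e ∈ D0, q e) :
    ∑ e ∈ D1, ℓ e < ∑ e ∈ D0, ℓ e :=
  stmt_14_general n hn Q hQ L' hL' D0 D1 hcard0 hcard1 q hqQ ℓ happrox hprod
end
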